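/- In a basic lattice B, for a non-empty proper ≺-filter U ⊊ B, the following are equivalent: (1) U is a ≺-ultrafilter (maximal among proper ≺-filters); (2) B∖U is a ⪯-ideal (i.e. downward ⪯-closed and closed under joins of pairs); (3) B∖U = {y ∈ B : ∀x ≺ y, ∃w ∈ U with w ∧ x = 0}. -/

import Mathlib

/-- A basic lattice: a transitive relation `prec` (≺) with minimum `zero`,
whose reflexivization `ple` (⪯) is a lattice order with meet `inf` and join `sup`,
satisfying coinitiality, cofinality, interpolation, multiplicativity, additivity,
decomposition and complementation. -/
structure BasicLattice (B : Type) where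
  prec : B → B → Prop
  zero : B
  inf : B → B → B
  sup : B → B → B
  trans : ∀ {x y z : B}, prec x y → prec y z → prec x z
  min : ∀ x, prec zero x
  antisymm : ∀ x y, (∀ z, prec z x → prec z y) → (∀ z, prec z y → prec z x) → x = y
  inf_le_left : ∀ x y z, prec z (inf x y) → prec z x
  inf_le_right : ∀ x y z, prec z (inf x y) → prec z y
  le_inf : ∀ x y w, (∀ z, prec z w → prec z x) → (∀ z, prec z w → prec z y) →
    ∀ z, prec z w → prec z (inf x y)
  le_sup_left : ∀ x y z, prec z x → prec z (sup x y)
  le_sup_right : ∀ x y z, prec z y → prec z (sup x y)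
  sup_le : ∀ x y w, (∀ z, prec z x → prec z w) → (∀ z, prec z y → prec z w) →
    ∀ z, prec z (sup x y) → prec z w
  coinit : ∀ x, x ≠ zero → ∃ z, z ≠ zero ∧ prec z x
  cofin : ∀ x, ∃ y, prec x y
  interp : ∀ x y, prec x y → ∃ z, prec x z ∧ prec z y
  mult : ∀ x x' y y', prec x x' → prec y y' → prec (inf x y) (inf x' y')
  add : ∀ x x' y y', prec x x' → prec y y' → prec (sup x y) (sup x' y')
  decomp : ∀ x y z, prec z (sup x y) → ∃ x' y', prec x' x ∧ prec y' y ∧ z = sup x' y'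
  compl : ∀ x y z, prec x y → prec y z → ∃ w, inf w x = zero ∧ sup w y = z

/-- The reflexivization ⪯ of ≺. -/
def BasicLattice.ple {B : Type} (L : BasicLattice B) (x y : B) : Prop :=
  ∀ z, L.prec z x → L.prec z y

/-- A ≺-filter: ≻-closed and ≺-directed. -/
def BasicLattice.IsPrecFilter {B : Type} (L : BasicLattice B) (U : Set B) : Prop :=
  (∀ x y, y ∈ U → L.prec y x → x ∈ U) ∧
  (∀ x y, x ∈ U → y ∈ U → ∃ z ∈ U, L.prec z x ∧ L.prec z y)

/-- A ≺-ultrafilter: a maximal proper ≺-filter. -/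
def BasicLattice.IsUltra {B : Type} (L : BasicLattice B) (U : Set B) : Prop :=
  L.IsPrecFilter U ∧ U ≠ Set.univ ∧
  ∀ V, L.IsPrecFilter V → V ≠ Set.univ → U ⊆ V → U = V

/-!
Call `y` remote from `U` when every `x ≺ y` is disjoint from some member of `U`. Remote elements
lie in no proper ≺-filter containing `U`, so all three conditions reduce to `Uᶜ ⊆ remote U`.
If this fails at some `x ≺ y ∉ U` meeting every member of `U`, then
`{v | ∃ w ∈ U, ∃ t ≻ x, w ∧ t ⪯ v}` is a proper ≺-filter containing `U` and `y`, so `U` is not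
maximal. If `Uᶜ` is closed under joins, complementation writes any `c ∈ U` above `y ≻ x` as
`w ∨ y` with `w ∧ x = 0`, forcing `w ∈ U`; conversely, decomposition shows that joins of remote
elements are remote.
-/

namespace BasicLattice

variable {B : Type} (L : BasicLattice B)

def remote (U : Set B) : Set B :=
  {y | ∀ x, L.prec x y → ∃ w ∈ U, L.inf w x = L.zero}

def adjoin (U : Set B) (x : B) : Set B :=
  {v | ∃ w ∈ U, ∃ t, L.prec x t ∧ L.ple (L.inf w t) v}

lemma ple_refl (x : B) : L.ple x x := fun _ h => h

lemma ple_of_prec {x y : B} (h : L.prec x y) : L.ple x y := fun _ hz => L.trans hz h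

lemma ple_trans {x y z : B} (h₁ : L.ple x y) (h₂ : L.ple y z) : L.ple x z :=
  fun w hw => h₂ w (h₁ w hw)

lemma eq_zero_of_ple_zero {x : B} (h : L.ple x L.zero) : x = L.zero :=
  L.antisymm x L.zero h (fun _ hz => L.trans hz (L.min x))

lemma inf_ple_left (x y : B) : L.ple (L.inf x y) x := L.inf_le_left x y

lemma inf_ple_right (x y : B) : L.ple (L.inf x y) y := L.inf_le_right x y

lemma ple_inf {x y w : B} (h₁ : L.ple w x) (h₂ : L.ple w y) : L.ple w (L.inf x y) :=
  L.le_inf x y w h₁ h₂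

lemma inf_ple_inf {a a' b b' : B} (ha : L.ple a a') (hb : L.ple b b') :
    L.ple (L.inf a b) (L.inf a' b') :=
  L.ple_inf (L.ple_trans (L.inf_ple_left a b) ha) (L.ple_trans (L.inf_ple_right a b) hb)

lemma ple_sup_left (x y : B) : L.ple x (L.sup x y) := L.le_sup_left x y

lemma ple_sup_right (x y : B) : L.ple y (L.sup x y) := L.le_sup_right x y

lemma sup_ple {x y w : B} (h₁ : L.ple x w) (h₂ : L.ple y w) : L.ple (L.sup x y) w :=
  L.sup_le x y w h₁ h₂

lemma inf_self (x : B) : L.inf x x = x :=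
  L.antisymm _ _ (L.inf_ple_left x x) (L.ple_inf (L.ple_refl x) (L.ple_refl x))

lemma sup_zero_zero : L.sup L.zero L.zero = L.zero :=
  L.antisymm _ _ (L.sup_ple (L.ple_refl _) (L.ple_refl _)) (L.ple_sup_left _ _)

lemma prec_inf {x y z : B} (hy : L.prec x y) (hz : L.prec x z) : L.prec x (L.inf y z) := by
  simpa only [L.inf_self] using L.mult x y x z hy hz

lemma inf_eq_zero_of_ple {w w' a : B} (hw : L.ple w w') (h : L.inf w' a = L.zero) :
    L.inf w a = L.zero :=
  L.eq_zero_of_ple_zero (h ▸ L.inf_ple_inf hw (L.ple_refl a))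

lemma inf_sup_eq_zero {w a b : B} (ha : L.inf w a = L.zero) (hb : L.inf w b = L.zero) :
    L.inf w (L.sup a b) = L.zero := by
  refine L.eq_zero_of_ple_zero fun t ht => ?_
  obtain ⟨p, q, hp, hq, rfl⟩ := L.decomp a b t (L.inf_le_right _ _ t ht)
  have htw : L.ple (L.sup p q) w := L.ple_trans (L.ple_of_prec ht) (L.inf_ple_left _ _)
  have hp0 : p = L.zero := L.eq_zero_of_ple_zero <| ha ▸
    L.ple_inf (L.ple_trans (L.ple_sup_left p q) htw) (L.ple_of_prec hp)
  have hq0 : q = L.zero := L.eq_zero_of_ple_zero <| hb ▸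
    L.ple_inf (L.ple_trans (L.ple_sup_right p q) htw) (L.ple_of_prec hq)
  rw [hp0, hq0, L.sup_zero_zero]
  exact L.min _

section Filter

variable {L} {U : Set B}

lemma IsPrecFilter.exists_prec_mem (hU : L.IsPrecFilter U) {y : B} (hy : y ∈ U) :
    ∃ z ∈ U, L.prec z y := by
  obtain ⟨z, hz, hzy, -⟩ := hU.2 y y hy hy
  exact ⟨z, hz, hzy⟩

lemma IsPrecFilter.mem_of_ple (hU : L.IsPrecFilter U) {u c : B} (hu : u ∈ U) (h : L.ple u c) :
    c ∈ U := by
  obtain ⟨z, hz, hzu⟩ := hU.exists_prec_mem hu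
  exact hU.1 c z hz (h z hzu)

lemma IsPrecFilter.inf_mem (hU : L.IsPrecFilter U) {a b : B} (ha : a ∈ U) (hb : b ∈ U) :
    L.inf a b ∈ U := by
  obtain ⟨z, hz, hza, hzb⟩ := hU.2 a b ha hb
  exact hU.mem_of_ple hz (L.ple_inf (L.ple_of_prec hza) (L.ple_of_prec hzb))

lemma IsPrecFilter.zero_not_mem (hU : L.IsPrecFilter U) (hproper : U ≠ Set.univ) :
    L.zero ∉ U := fun h0 =>
  hproper (Set.eq_univ_of_forall fun a => hU.1 a L.zero h0 (L.min a))

lemma IsPrecFilter.not_mem_of_mem_remote {V : Set B} (hV : L.IsPrecFilter V)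
    (hproper : V ≠ Set.univ) (hUV : U ⊆ V) {y : B} (hy : y ∈ L.remote U) : y ∉ V := by
  intro hyV
  obtain ⟨z, hzV, hzy⟩ := hV.exists_prec_mem hyV
  obtain ⟨w, hwU, hwz⟩ := hy z hzy
  exact hV.zero_not_mem hproper (hwz ▸ hV.inf_mem (hUV hwU) hzV)

lemma IsPrecFilter.remote_subset_compl (hU : L.IsPrecFilter U) (hproper : U ≠ Set.univ) :
    L.remote U ⊆ Uᶜ :=
  fun _ hy => hU.not_mem_of_mem_remote hproper subset_rfl hy

lemma IsPrecFilter.isUltra_of_compl_subset_remote (hU : L.IsPrecFilter U)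
    (hproper : U ≠ Set.univ) (h : Uᶜ ⊆ L.remote U) : L.IsUltra U := by
  refine ⟨hU, hproper, fun V hV hVproper hUV => hUV.antisymm fun v hv => ?_⟩
  by_contra hvU
  exact hV.not_mem_of_mem_remote hVproper hUV (h hvU) hv

lemma isPrecFilter_adjoin (hU : L.IsPrecFilter U) (x : B) : L.IsPrecFilter (L.adjoin U x) := by
  constructor
  · rintro a b ⟨w, hw, t, hxt, hb⟩ hba
    exact ⟨w, hw, t, hxt, L.ple_trans hb (L.ple_of_prec hba)⟩
  · rintro v₁ v₂ ⟨w₁, hw₁, t₁, hxt₁, h₁⟩ ⟨w₂, hw₂, t₂, hxt₂, h₂⟩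
    obtain ⟨w, hw, hww₁, hww₂⟩ := hU.2 w₁ w₂ hw₁ hw₂
    obtain ⟨t, hxt, ht⟩ := L.interp x _ (L.prec_inf hxt₁ hxt₂)
    refine ⟨L.inf w t, ⟨w, hw, t, hxt, L.ple_refl _⟩, ?_, ?_⟩
    · exact h₁ _ <| L.mult _ _ _ _ hww₁ (L.inf_le_left _ _ _ ht)
    · exact h₂ _ <| L.mult _ _ _ _ hww₂ (L.inf_le_right _ _ _ ht)

lemma subset_adjoin (x : B) : U ⊆ L.adjoin U x := fun w hw => by
  obtain ⟨t, hxt⟩ := L.cofin x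
  exact ⟨w, hw, t, hxt, L.inf_ple_left w t⟩

lemma mem_adjoin_of_prec (hne : U.Nonempty) {x y : B} (hxy : L.prec x y) :
    y ∈ L.adjoin U x := by
  obtain ⟨u, hu⟩ := hne
  exact ⟨u, hu, y, hxy, L.inf_ple_right u y⟩

lemma exists_inf_eq_zero_of_zero_mem_adjoin {x : B} (h : L.zero ∈ L.adjoin U x) :
    ∃ w ∈ U, L.inf w x = L.zero := by
  obtain ⟨w, hw, t, hxt, h0⟩ := h
  exact ⟨w, hw, L.eq_zero_of_ple_zero <|
    L.ple_trans (L.inf_ple_inf (L.ple_refl w) (L.ple_of_prec hxt)) h0⟩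

lemma IsUltra.compl_subset_remote (hU : L.IsUltra U) (hne : U.Nonempty) :
    Uᶜ ⊆ L.remote U := by
  obtain ⟨hfil, -, hmax⟩ := hU
  intro y hy x hxy
  by_contra hx
  have hproper : L.adjoin U x ≠ Set.univ := fun huniv =>
    hx (exists_inf_eq_zero_of_zero_mem_adjoin (huniv ▸ Set.mem_univ _))
  have hUeq := hmax _ (isPrecFilter_adjoin hfil x) hproper (subset_adjoin x)
  exact hy (hUeq ▸ mem_adjoin_of_prec hne hxy)

lemma IsPrecFilter.compl_subset_remote_of_sup_mem_compl (hU : L.IsPrecFilter U)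
    (hne : U.Nonempty) (hsup : ∀ a b, a ∈ Uᶜ → b ∈ Uᶜ → L.sup a b ∈ Uᶜ) : Uᶜ ⊆ L.remote U := by
  intro y hy x hxy
  obtain ⟨u, hu⟩ := hne
  obtain ⟨e, hye⟩ := L.cofin y
  have hc : L.sup e u ∈ U := hU.mem_of_ple hu (L.ple_sup_right e u)
  obtain ⟨w, hwx, hwy⟩ := L.compl x y _ hxy (L.ple_sup_left e u y hye)
  refine ⟨w, ?_, hwx⟩
  by_contra hw
  exact hsup w y hw hy (hwy ▸ hc)

lemma IsPrecFilter.sup_mem_remote (hU : L.IsPrecFilter U) {a b : B} (ha : a ∈ L.remote U)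
    (hb : b ∈ L.remote U) : L.sup a b ∈ L.remote U := by
  intro z hz
  obtain ⟨a', b', ha', hb', rfl⟩ := L.decomp a b z hz
  obtain ⟨w₁, hw₁, hw₁a⟩ := ha a' ha'
  obtain ⟨w₂, hw₂, hw₂b⟩ := hb b' hb'
  obtain ⟨w, hw, hww₁, hww₂⟩ := hU.2 w₁ w₂ hw₁ hw₂
  exact ⟨w, hw, L.inf_sup_eq_zero (L.inf_eq_zero_of_ple (L.ple_of_prec hww₁) hw₁a)
    (L.inf_eq_zero_of_ple (L.ple_of_prec hww₂) hw₂b)⟩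

lemma IsPrecFilter.sup_mem_compl_of_compl_subset_remote (hU : L.IsPrecFilter U)
    (hproper : U ≠ Set.univ) (h : Uᶜ ⊆ L.remote U) {a b : B} (ha : a ∈ Uᶜ) (hb : b ∈ Uᶜ) :
    L.sup a b ∈ Uᶜ :=
  hU.remote_subset_compl hproper (hU.sup_mem_remote (h ha) (h hb))

end Filter

end BasicLattice

/-- Characterizations of ≺-ultrafilters in a basic lattice: for a non-empty proper
≺-filter U the following are equivalent: U is a ≺-ultrafilter; the complement of U
is a ⪯-ideal; the complement of U is the set of y such that every x ≺ y is
disjoint from some element of U. -/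
theorem precUltrafilter_characterizations {B : Type} (L : BasicLattice B)
    (U : Set B) (hne : U.Nonempty) (hfil : L.IsPrecFilter U) (hproper : U ≠ Set.univ) :
    (L.IsUltra U ↔
      ((∀ x y, y ∈ Uᶜ → L.ple x y → x ∈ Uᶜ) ∧
       (∀ x y, x ∈ Uᶜ → y ∈ Uᶜ → L.sup x y ∈ Uᶜ))) ∧
    (L.IsUltra U ↔
      Uᶜ = {y | ∀ x, L.prec x y → ∃ w ∈ U, L.inf w x = L.zero}) := by
  have ultra_iff : L.IsUltra U ↔ Uᶜ ⊆ L.remote U :=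
    ⟨fun hu => hu.compl_subset_remote hne, hfil.isUltra_of_compl_subset_remote hproper⟩
  have ideal_iff : ((∀ x y, y ∈ Uᶜ → L.ple x y → x ∈ Uᶜ) ∧
      (∀ x y, x ∈ Uᶜ → y ∈ Uᶜ → L.sup x y ∈ Uᶜ)) ↔ Uᶜ ⊆ L.remote U :=
    ⟨fun h => hfil.compl_subset_remote_of_sup_mem_compl hne h.2,
      fun h => ⟨fun _ _ hy hxy hx => hy (hfil.mem_of_ple hx hxy),
        fun _ _ => hfil.sup_mem_compl_of_compl_subset_remote hproper h⟩⟩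
  refine ⟨ultra_iff.trans ideal_iff.symm, ultra_iff.trans ⟨fun h => ?_, fun h => h.le⟩⟩
  exact h.antisymm (hfil.remote_subset_compl hproper)
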